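/- arXiv:2504.11789 — 3 statements merged into one kernel-verified Lean document; each statement's English description precedes it below -/
import Mathlib

section
/- Let $G:\mathbb{R}^d\times\mathbb{R}^d\to\mathbb{R}$ be convex in its second variable and satisfy $\alpha_0|p|^\gamma - 1/\alpha_0 \le G(x,p) \le \alpha_1(|p|^\gamma+1)$ for all $(x,p)$, where $\alpha_0,\alpha_1>0$ and $\gamma>1$. Then there exist constants $b,K>0$ depending only on $\alpha_0,\alpha_1,\gamma$ such that $\langle q,p\rangle - G(x,p) \ge b|p|^\gamma - K$ for all $(x,p)$ and all $q$ in the subdifferential $\partial_p G(x,p)$ of $G(x,\cdot)$ at $p$. -/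
open scoped RealInnerProductSpace

noncomputable section

theorem stmt0 {d : ℕ} (G : EuclideanSpace ℝ (Fin d) → EuclideanSpace ℝ (Fin d) → ℝ)
    (α₀ α₁ γ : ℝ) (hα₀ : 0 < α₀) (hα₁ : 0 < α₁) (hγ : 1 < γ)
    (hconv : ∀ x, ConvexOn ℝ Set.univ (G x))
    (hlow : ∀ x p, α₀ * ‖p‖ ^ γ - 1 / α₀ ≤ G x p)
    (hup : ∀ x p, G x p ≤ α₁ * (‖p‖ ^ γ + 1)) :
    ∃ b K : ℝ, 0 < b ∧ 0 < K ∧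
      ∀ x p q, (∀ p', G x p + ⟪q, p' - p⟫ ≤ G x p') →
        b * ‖p‖ ^ γ - K ≤ ⟪q, p⟫ - G x p := by
  set τ : ℝ := min ((α₀ / (2 * α₁)) ^ (1 / (γ - 1))) (1/2) with hτdef
  have hγ1 : 0 < γ - 1 := by linarith
  have hbase : 0 < α₀ / (2 * α₁) := by positivity
  have hτ0 : 0 < τ := lt_min (Real.rpow_pos_of_pos hbase _) (by norm_num)
  have hτhalf : τ ≤ 1/2 := min_le_right _ _
  have h1τ : 0 < 1 - τ := by linarith
  -- key: α₁ * τ^(γ-1) ≤ α₀/2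
  have hkey : α₁ * τ ^ (γ - 1) ≤ α₀ / 2 := by
    have h1 : τ ^ (γ - 1) ≤ ((α₀ / (2 * α₁)) ^ (1 / (γ - 1))) ^ (γ - 1) :=
      Real.rpow_le_rpow hτ0.le (min_le_left _ _) hγ1.le
    have h2 : ((α₀ / (2 * α₁)) ^ (1 / (γ - 1))) ^ (γ - 1) = α₀ / (2 * α₁) := by
      rw [← Real.rpow_mul hbase.le, one_div_mul_cancel (ne_of_gt hγ1), Real.rpow_one]
    rw [h2] at h1
    calc α₁ * τ ^ (γ - 1) ≤ α₁ * (α₀ / (2 * α₁)) := by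
          exact mul_le_mul_of_nonneg_left h1 hα₁.le
      _ = α₀ / 2 := by field_simp
  have hτγ : α₁ * τ ^ γ ≤ α₀ / 2 * τ := by
    have : τ ^ γ = τ ^ (γ - 1) * τ := by
      rw [show γ = (γ - 1) + 1 by ring, Real.rpow_add hτ0, Real.rpow_one]
      ring_nf
    rw [this]
    calc α₁ * (τ ^ (γ - 1) * τ) = (α₁ * τ ^ (γ - 1)) * τ := by ring
      _ ≤ α₀ / 2 * τ := mul_le_mul_of_nonneg_right hkey hτ0.le
  refine ⟨τ * α₀ / (2 * (1 - τ)), (τ / α₀ + α₁) / (1 - τ), by positivity, by positivity, ?_⟩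
  intro x p q hq
  have hX : (0:ℝ) ≤ ‖p‖ ^ γ := Real.rpow_nonneg (norm_nonneg p) γ
  have h2 := hq (τ • p)
  have hin : ⟪q, τ • p - p⟫ = τ * ⟪q, p⟫ - ⟪q, p⟫ := by
    rw [inner_sub_right, real_inner_smul_right]
  rw [hin] at h2
  have hnorm : ‖τ • p‖ ^ γ = τ ^ γ * ‖p‖ ^ γ := by
    rw [norm_smul, Real.norm_eq_abs, abs_of_pos hτ0,
      Real.mul_rpow hτ0.le (norm_nonneg p)]
  have h3 : G x (τ • p) ≤ α₁ * (τ ^ γ * ‖p‖ ^ γ + 1) := by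
    have := hup x (τ • p); rwa [hnorm] at this
  have h4 := hlow x p
  have hmain : (τ * α₀ / 2) * ‖p‖ ^ γ - (τ / α₀ + α₁) ≤ (1 - τ) * (⟪q, p⟫ - G x p) := by
    have hprod : 0 ≤ (α₀ / 2 * τ - α₁ * τ ^ γ) * ‖p‖ ^ γ :=
      mul_nonneg (by linarith) hX
    have hτh4 : τ * (α₀ * ‖p‖ ^ γ - 1 / α₀) ≤ τ * G x p :=
      mul_le_mul_of_nonneg_left h4 hτ0.le
    have e1 : (1 - τ) * (⟪q, p⟫ - G x p)
        = (⟪q, p⟫ - τ * ⟪q, p⟫) - G x p + τ * G x p := by ring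
    have e2 : τ * (α₀ * ‖p‖ ^ γ - 1 / α₀) = α₀ * (τ * ‖p‖ ^ γ) - τ * (1 / α₀) := by ring
    rw [e2] at hτh4
    have e3 : (α₀ / 2 * τ - α₁ * τ ^ γ) * ‖p‖ ^ γ
        = α₀ / 2 * (τ * ‖p‖ ^ γ) - α₁ * (τ ^ γ * ‖p‖ ^ γ) := by ring
    rw [e3] at hprod
    have e4 : τ * α₀ / 2 * ‖p‖ ^ γ - (τ / α₀ + α₁)
        = α₀ / 2 * (τ * ‖p‖ ^ γ) - τ * (1 / α₀) - α₁ := by ring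
    rw [e4, e1]
    linarith [h2, h3, hτh4, hprod]
  have hdiv : (τ * α₀ / (2 * (1 - τ))) * ‖p‖ ^ γ - (τ / α₀ + α₁) / (1 - τ)
      = ((τ * α₀ / 2) * ‖p‖ ^ γ - (τ / α₀ + α₁)) / (1 - τ) := by
    field_simp
  rw [hdiv, div_le_iff₀ h1τ]
  linarith [hmain]
end
end

section
/- Let $X$ be a compact metric space, $\mathcal{G}\subset C(X)$ a closed convex cone containing all nonnegative continuous functions, with nonempty interior, and let $g\in\partial\mathcal{G}$ be a boundary point of $\mathcal{G}$. Then there exists a Borel probability measure $\mu$ on $X$ such that $\int_X f\,d\mu \ge 0$ for all $f\in\mathcal{G}$ and $\int_X g\,d\mu = 0$. -/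
open MeasureTheory

noncomputable section

open MeasureTheory Set TopologicalSpace Filter Topology
open scoped NNReal ENNReal

set_option linter.unusedSectionVars false
set_option linter.unusedVariables false

noncomputable section

namespace Stmt11Aux

variable {X : Type*} [MetricSpace X] [CompactSpace X] [MeasurableSpace X] [BorelSpace X]

/-- Test functions for the Riesz content of a set `K`. -/
def testFns (K : Set X) : Set C(X, ℝ) := {f | (∀ x, 0 ≤ f x) ∧ ∀ x ∈ K, 1 ≤ f x}

lemma one_mem_testFns (K : Set X) : (1 : C(X, ℝ)) ∈ testFns K :=
  ⟨fun _ => zero_le_one, fun _ _ => le_refl 1⟩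

variable (ψ : C(X, ℝ) →ₗ[ℝ] ℝ)

/-- The Riesz content. -/
def rc (K : Set X) : ℝ := sInf (ψ '' testFns K)

lemma psi_mono (hpos : ∀ f : C(X, ℝ), (∀ x, 0 ≤ f x) → 0 ≤ ψ f)
    {f g : C(X, ℝ)} (h : ∀ x, f x ≤ g x) : ψ f ≤ ψ g := by
  have h0 : 0 ≤ ψ (g - f) := hpos _ (fun x => by simpa using sub_nonneg.mpr (h x))
  rw [map_sub] at h0; linarith

lemma rc_lb (hpos : ∀ f : C(X, ℝ), (∀ x, 0 ≤ f x) → 0 ≤ ψ f) (K : Set X) :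
    ∀ y ∈ ψ '' testFns K, (0 : ℝ) ≤ y := by
  rintro y ⟨f, hf, rfl⟩; exact hpos f hf.1

lemma rc_nonneg (hpos : ∀ f : C(X, ℝ), (∀ x, 0 ≤ f x) → 0 ≤ ψ f) (K : Set X) :
    0 ≤ rc ψ K :=
  le_csInf ⟨ψ 1, mem_image_of_mem _ (one_mem_testFns K)⟩ (rc_lb ψ hpos K)

lemma rc_le (hpos : ∀ f : C(X, ℝ), (∀ x, 0 ≤ f x) → 0 ≤ ψ f) {K : Set X}
    {f : C(X, ℝ)} (hf : f ∈ testFns K) : rc ψ K ≤ ψ f :=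
  csInf_le ⟨0, rc_lb ψ hpos K⟩ (mem_image_of_mem _ hf)

lemma rc_mono (hpos : ∀ f : C(X, ℝ), (∀ x, 0 ≤ f x) → 0 ≤ ψ f) {K₁ K₂ : Set X}
    (h : K₁ ⊆ K₂) : rc ψ K₁ ≤ rc ψ K₂ := by
  refine csInf_le_csInf ⟨0, rc_lb ψ hpos K₁⟩
    ⟨ψ 1, mem_image_of_mem _ (one_mem_testFns K₂)⟩ (image_mono ?_)
  rintro f ⟨hf0, hf1⟩
  exact ⟨hf0, fun x hx => hf1 x (h hx)⟩

lemma exists_rc_lt (hpos : ∀ f : C(X, ℝ), (∀ x, 0 ≤ f x) → 0 ≤ ψ f) (K : Set X)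
    {ε : ℝ} (hε : 0 < ε) : ∃ f ∈ testFns K, ψ f < rc ψ K + ε := by
  obtain ⟨y, hy, hylt⟩ := exists_lt_of_csInf_lt
    (s := ψ '' testFns K) ⟨ψ 1, mem_image_of_mem _ (one_mem_testFns K)⟩
    (lt_add_of_pos_right (rc ψ K) hε)
  obtain ⟨f, hf, rfl⟩ := hy
  exact ⟨f, hf, hylt⟩

lemma rc_union_le (hpos : ∀ f : C(X, ℝ), (∀ x, 0 ≤ f x) → 0 ≤ ψ f) (K₁ K₂ : Set X) :
    rc ψ (K₁ ∪ K₂) ≤ rc ψ K₁ + rc ψ K₂ := by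
  refine le_of_forall_pos_le_add fun ε hε => ?_
  obtain ⟨f₁, hf₁, hψ₁⟩ := exists_rc_lt ψ hpos K₁ (half_pos hε)
  obtain ⟨f₂, hf₂, hψ₂⟩ := exists_rc_lt ψ hpos K₂ (half_pos hε)
  have hmem : f₁ + f₂ ∈ testFns (K₁ ∪ K₂) := by
    constructor
    · intro x; simpa using add_nonneg (hf₁.1 x) (hf₂.1 x)
    · rintro x (hx | hx)
      · have := hf₁.2 x hx; have := hf₂.1 x
        simp only [ContinuousMap.add_apply]; linarith
      · have := hf₂.2 x hx; have := hf₁.1 x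
        simp only [ContinuousMap.add_apply]; linarith
  have := rc_le ψ hpos hmem
  rw [map_add] at this
  linarith

lemma rc_union_eq (hpos : ∀ f : C(X, ℝ), (∀ x, 0 ≤ f x) → 0 ≤ ψ f) {K₁ K₂ : Set X}
    (hd : Disjoint K₁ K₂) (h₁ : IsClosed K₁) (h₂ : IsClosed K₂) :
    rc ψ (K₁ ∪ K₂) = rc ψ K₁ + rc ψ K₂ := by
  refine le_antisymm (rc_union_le ψ hpos K₁ K₂) (le_of_forall_pos_le_add fun ε hε => ?_)
  obtain ⟨f, hf, hψ⟩ := exists_rc_lt ψ hpos (K₁ ∪ K₂) hε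
  obtain ⟨u, hu1, hu2, hu01⟩ := exists_continuous_zero_one_of_isClosed h₁ h₂ hd
  -- `u = 0` on `K₁`, `u = 1` on `K₂`
  have hm1 : f * ((1 : C(X, ℝ)) - u) ∈ testFns K₁ := by
    constructor
    · intro x
      simp only [ContinuousMap.mul_apply, ContinuousMap.sub_apply, ContinuousMap.one_apply]
      exact mul_nonneg (hf.1 x) (by have := (hu01 x).2; linarith)
    · intro x hx
      have : u x = 0 := hu1 hx
      simp only [ContinuousMap.mul_apply, ContinuousMap.sub_apply, ContinuousMap.one_apply, this]
      simpa using hf.2 x (Or.inl hx)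
  have hm2 : f * u ∈ testFns K₂ := by
    constructor
    · intro x
      exact mul_nonneg (hf.1 x) (hu01 x).1
    · intro x hx
      have : u x = 1 := hu2 hx
      simp only [ContinuousMap.mul_apply, this, mul_one]
      exact hf.2 x (Or.inr hx)
  have hsum : ψ (f * ((1 : C(X, ℝ)) - u)) + ψ (f * u) = ψ f := by
    rw [← map_add]; congr 1; ring
  have i1 := rc_le ψ hpos hm1
  have i2 := rc_le ψ hpos hm2
  linarith

lemma rc_univ (hpos : ∀ f : C(X, ℝ), (∀ x, 0 ≤ f x) → 0 ≤ ψ f) :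
    rc ψ (univ : Set X) = ψ 1 := by
  refine le_antisymm (rc_le ψ hpos (one_mem_testFns univ)) ?_
  refine le_csInf ⟨ψ 1, mem_image_of_mem _ (one_mem_testFns univ)⟩ ?_
  rintro y ⟨f, hf, rfl⟩
  exact psi_mono ψ hpos (fun x => by simpa using hf.2 x (mem_univ x))

/-- The Riesz content as a `Content`. -/
def rieszContent (hpos : ∀ f : C(X, ℝ), (∀ x, 0 ≤ f x) → 0 ≤ ψ f) : Content X where
  toFun K := ⟨rc ψ K, rc_nonneg ψ hpos K⟩
  mono' K₁ K₂ h := by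
    exact rc_mono ψ hpos h
  sup_disjoint' K₁ K₂ hd hc₁ hc₂ := by
    ext
    push_cast
    exact rc_union_eq ψ hpos hd hc₁ hc₂
  sup_le' K₁ K₂ := by
    exact rc_union_le ψ hpos K₁ K₂


/-- The Riesz measure. -/
def rmeas (hpos : ∀ f : C(X, ℝ), (∀ x, 0 ≤ f x) → 0 ≤ ψ f) : Measure X :=
  (rieszContent ψ hpos).measure

lemma rmeas_open (hpos : ∀ f : C(X, ℝ), (∀ x, 0 ≤ f x) → 0 ≤ ψ f)
    {U : Set X} (hU : IsOpen U) :
    rmeas ψ hpos U = (rieszContent ψ hpos).innerContent ⟨U, hU⟩ := by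
  rw [rmeas, Content.measure_apply _ hU.measurableSet,
    (rieszContent ψ hpos).outerMeasure_of_isOpen U hU]

lemma rmeas_univ_aux (hpos : ∀ f : C(X, ℝ), (∀ x, 0 ≤ f x) → 0 ≤ ψ f) :
    rmeas ψ hpos (univ : Set X) = ((rieszContent ψ hpos) ⟨univ, isCompact_univ⟩ : ℝ≥0∞) := by
  rw [rmeas_open ψ hpos isOpen_univ]
  refine le_antisymm ?_ ?_
  · exact (rieszContent ψ hpos).innerContent_le ⟨univ, isOpen_univ⟩ ⟨univ, isCompact_univ⟩
      subset_rfl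
  · exact (rieszContent ψ hpos).le_innerContent ⟨univ, isCompact_univ⟩ ⟨univ, isOpen_univ⟩
      (subset_univ _)

lemma rmeas_univ_ne_top (hpos : ∀ f : C(X, ℝ), (∀ x, 0 ≤ f x) → 0 ≤ ψ f) :
    rmeas ψ hpos (univ : Set X) ≠ ⊤ := by
  rw [rmeas_univ_aux ψ hpos]; exact ENNReal.coe_ne_top

lemma rmeas_isFiniteMeasure (hpos : ∀ f : C(X, ℝ), (∀ x, 0 ≤ f x) → 0 ≤ ψ f) :
    IsFiniteMeasure (rmeas ψ hpos) :=
  ⟨lt_top_iff_ne_top.mpr (rmeas_univ_ne_top ψ hpos)⟩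

lemma rmeas_ne_top (hpos : ∀ f : C(X, ℝ), (∀ x, 0 ≤ f x) → 0 ≤ ψ f) (s : Set X) :
    rmeas ψ hpos s ≠ ⊤ :=
  ne_top_of_le_ne_top (rmeas_univ_ne_top ψ hpos) (measure_mono (subset_univ s))

lemma rmeas_univ_toReal (hpos : ∀ f : C(X, ℝ), (∀ x, 0 ≤ f x) → 0 ≤ ψ f) :
    (rmeas ψ hpos (univ : Set X)).toReal = ψ 1 := by
  rw [rmeas_univ_aux ψ hpos]; change ((rieszContent ψ hpos).toFun _ : ℝ≥0∞).toReal = _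
  rw [ENNReal.coe_toReal]
  have : ((rieszContent ψ hpos).toFun ⟨univ, isCompact_univ⟩ : ℝ) = rc ψ univ := rfl
  rw [this]
  exact rc_univ ψ hpos

/-- Key upper bound: a `[0,1]`-valued function supported in an open `U` has `ψ`-value at most
the measure of `U`. -/
lemma psi_le_rmeas (hpos : ∀ f : C(X, ℝ), (∀ x, 0 ≤ f x) → 0 ≤ ψ f)
    (h : C(X, ℝ)) (h0 : ∀ x, 0 ≤ h x) (h1 : ∀ x, h x ≤ 1)
    {U : Set X} (hU : IsOpen U) (hsupp : tsupport h ⊆ U) :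
    ψ h ≤ (rmeas ψ hpos U).toReal := by
  have hKc : IsCompact (tsupport h) := (isClosed_tsupport _).isCompact
  have step1 : ψ h ≤ rc ψ (tsupport h) := by
    refine le_csInf ⟨ψ 1, mem_image_of_mem _ (one_mem_testFns _)⟩ ?_
    rintro y ⟨f, ⟨hf0, hf1⟩, rfl⟩
    refine psi_mono ψ hpos fun x => ?_
    by_cases hx : x ∈ tsupport h
    · exact le_trans (h1 x) (hf1 x hx)
    · rw [image_eq_zero_of_notMem_tsupport hx]; exact hf0 x
  have step2 : (rieszContent ψ hpos) ⟨tsupport h, hKc⟩ ≤ rmeas ψ hpos U := by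
    rw [rmeas_open ψ hpos hU]
    exact (rieszContent ψ hpos).le_innerContent ⟨tsupport h, hKc⟩ ⟨U, hU⟩ hsupp
  have step3 : ((rieszContent ψ hpos) ⟨tsupport h, hKc⟩).toReal ≤ (rmeas ψ hpos U).toReal :=
    ENNReal.toReal_mono (rmeas_ne_top ψ hpos U) step2
  refine le_trans ?_ step3
  exact step1


set_option maxHeartbeats 1000000 in
lemma psi_le_integral (hpos : ∀ f : C(X, ℝ), (∀ x, 0 ≤ f x) → 0 ≤ ψ f) (f : C(X, ℝ)) :
    ψ f ≤ ∫ x, f x ∂(rmeas ψ hpos) := by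
  haveI : IsFiniteMeasure (rmeas ψ hpos) := rmeas_isFiniteMeasure ψ hpos
  haveI hOR : (rmeas ψ hpos).OuterRegular := Content.outerRegular _
  have hψ1 : 0 ≤ ψ 1 := hpos 1 fun _ => zero_le_one
  have hfint : Integrable (fun x => f x) (rmeas ψ hpos) := by
    rw [← integrableOn_univ]
    exact (map_continuous f).continuousOn.integrableOn_compact isCompact_univ
  have hfabs : ∀ x, |f x| ≤ ‖f‖ := fun x => by
    simpa [Real.norm_eq_abs] using f.norm_coe_le_norm x
  have main : ∀ ε : ℝ, 0 < ε → ε ≤ 1 →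
      ψ f ≤ (∫ x, f x ∂(rmeas ψ hpos)) + ε * (2 * ψ 1 + 4 * ‖f‖ + 6) := by
    intro ε hε hε1
    set μ := rmeas ψ hpos with hμdef
    set N : ℕ := ⌈(2 * ‖f‖) / ε⌉₊ + 1 with hN
    have hN0 : 0 < N := Nat.succ_pos _
    have hNR : (0:ℝ) < N := by exact_mod_cast hN0
    set y : ℕ → ℝ := fun i => -‖f‖ - ε + i * ε with hy
    have hymono : ∀ {p q : ℕ}, p ≤ q → y p ≤ y q := by
      intro p q hpq
      have hc : (p:ℝ) ≤ q := Nat.cast_le.mpr hpq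
      simp only [hy]
      nlinarith
    have hyN : y N ≤ ‖f‖ + ε := by
      have h1 : (N : ℝ) < 2 * ‖f‖ / ε + 2 := by
        have h2 := Nat.ceil_lt_add_one (a := 2 * ‖f‖ / ε) (by positivity)
        have : (N:ℝ) = (⌈(2 * ‖f‖) / ε⌉₊ : ℝ) + 1 := by push_cast [hN]; ring
        linarith
      have h3 : (N:ℝ) * ε < (2 * ‖f‖ / ε + 2) * ε := by
        exact mul_lt_mul_of_pos_right h1 hε
      have h4 : (2 * ‖f‖ / ε) * ε = 2 * ‖f‖ := div_mul_cancel₀ _ (ne_of_gt hε)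
      simp only [hy]
      nlinarith
    have hmem : ∀ x : X, ∃ i : Fin N, f x ∈ Ioc (y (i : ℕ)) (y ((i : ℕ) + 1)) := by
      intro x
      have hfx := abs_le.mp (hfabs x)
      have hy0 : y 0 = -‖f‖ - ε := by simp [hy]
      have hq : 0 < (f x - y 0) / ε := by
        rw [hy0]; apply div_pos _ hε; linarith [hfx.1]
      set j : ℕ := ⌈(f x - y 0) / ε⌉₊ with hj
      have hj1 : 1 ≤ j := Nat.one_le_iff_ne_zero.mpr (by positivity)
      have hjN : j ≤ N := by
        rw [hj, Nat.ceil_le]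
        rw [div_le_iff₀ hε]
        have h5 : 2 * ‖f‖ ≤ (⌈2 * ‖f‖ / ε⌉₊ : ℝ) * ε := by
          have := Nat.le_ceil (2 * ‖f‖ / ε)
          calc 2 * ‖f‖ = (2 * ‖f‖ / ε) * ε := (div_mul_cancel₀ _ (ne_of_gt hε)).symm
            _ ≤ (⌈2 * ‖f‖ / ε⌉₊ : ℝ) * ε := mul_le_mul_of_nonneg_right this hε.le
        have : ((N:ℕ) : ℝ) = (⌈(2 * ‖f‖) / ε⌉₊ : ℝ) + 1 := by push_cast [hN]; ring
        rw [hy0, this]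
        nlinarith [hfx.2]
      refine ⟨⟨j - 1, by omega⟩, ?_, ?_⟩
      · show y ((j : ℕ) - 1) < f x
        have hceil : ((j:ℕ) : ℝ) < (f x - y 0) / ε + 1 := by
          rw [hj]; exact_mod_cast Nat.ceil_lt_add_one hq.le
        have hcast : (((j:ℕ) - 1 : ℕ) : ℝ) = ((j:ℕ) : ℝ) - 1 := by
          push_cast [Nat.cast_sub hj1]; ring
        have h6 : (((j:ℕ) - 1 : ℕ) : ℝ) * ε < f x - y 0 := by
          rw [hcast]
          have h7 : ((j:ℕ) : ℝ) - 1 < (f x - y 0) / ε := by linarith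
          calc (((j:ℕ) : ℝ) - 1) * ε < ((f x - y 0) / ε) * ε :=
                mul_lt_mul_of_pos_right h7 hε
            _ = f x - y 0 := div_mul_cancel₀ _ (ne_of_gt hε)
        simp only [hy, hy0] at h6 ⊢
        push_cast at h6 ⊢
        linarith
      · show f x ≤ y (((j : ℕ) - 1) + 1)
        have h8 : ((j : ℕ) - 1) + 1 = j := by omega
        rw [h8]
        have h9 : (f x - y 0) / ε ≤ ((j:ℕ) : ℝ) := by
          rw [hj]; exact_mod_cast Nat.le_ceil _
        have h10 : f x - y 0 ≤ ((j:ℕ) : ℝ) * ε := by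
          calc f x - y 0 = ((f x - y 0) / ε) * ε := (div_mul_cancel₀ _ (ne_of_gt hε)).symm
            _ ≤ ((j:ℕ) : ℝ) * ε := mul_le_mul_of_nonneg_right h9 hε.le
        simp only [hy, hy0] at h10 ⊢
        push_cast at h10 ⊢
        linarith
    set E : Fin N → Set X := fun i => (fun x => f x) ⁻¹' Ioc (y (i : ℕ)) (y ((i : ℕ) + 1))
      with hE
    have hEm : ∀ i, MeasurableSet (E i) := fun i =>
      (map_continuous f).measurable measurableSet_Ioc
    have hEdis : Pairwise (Function.onFun Disjoint E) := by
      have key : ∀ i j : Fin N, (i:ℕ) < (j:ℕ) → Disjoint (E i) (E j) := by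
        intro i j hij
        rw [Set.disjoint_left]
        rintro x hxi hxj
        have h1 : f x ≤ y ((i:ℕ) + 1) := hxi.2
        have h2 : y ((j:ℕ)) < f x := hxj.1
        have h3 : y ((i:ℕ) + 1) ≤ y ((j:ℕ)) := hymono (by omega)
        linarith
      intro i j hij
      rcases lt_or_gt_of_ne (fun h => hij (Fin.ext h) : (i:ℕ) ≠ (j:ℕ)) with h | h
      · exact key i j h
      · exact (key j i h).symm
    have hEuniv : ⋃ i, E i = univ := by
      refine eq_univ_of_forall fun x => mem_iUnion.mpr ?_
      obtain ⟨i, hi⟩ := hmem x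
      exact ⟨i, hi⟩
    have hWex : ∀ i, ∃ V : Set X, E i ⊆ V ∧ IsOpen V ∧
        μ V ≤ μ (E i) + ENNReal.ofReal (ε / N) := by
      intro i
      have hne : ENNReal.ofReal (ε / N) ≠ 0 := by
        simp only [ne_eq, ENNReal.ofReal_eq_zero, not_le]
        positivity
      have hlt : μ (E i) < μ (E i) + ENNReal.ofReal (ε / N) :=
        ENNReal.lt_add_right (rmeas_ne_top ψ hpos _) hne
      obtain ⟨V, hEV, hVo, hVlt⟩ := (E i).exists_isOpen_lt_of_lt _ hlt
      exact ⟨V, hEV, hVo, hVlt.le⟩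
    choose W hEW hWo hWμ using hWex
    set U : Fin N → Set X := fun i => W i ∩ (fun x => f x) ⁻¹' Iio (y ((i:ℕ) + 1) + ε)
      with hU
    have hUo : ∀ i, IsOpen (U i) := fun i =>
      (hWo i).inter (IsOpen.preimage (map_continuous f) isOpen_Iio)
    have hEU : ∀ i, E i ⊆ U i := by
      intro i x hx
      refine ⟨hEW i hx, ?_⟩
      have : f x ≤ y ((i:ℕ) + 1) := hx.2
      simp only [mem_preimage, mem_Iio]
      linarith
    have hUμ : ∀ i, μ (U i) ≤ μ (E i) + ENNReal.ofReal (ε / N) := fun i =>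
      le_trans (measure_mono inter_subset_left) (hWμ i)
    have hcover : (univ : Set X) ⊆ ⋃ i, U i := by
      rw [← hEuniv]; exact iUnion_mono hEU
    obtain ⟨ρ, hρ⟩ := PartitionOfUnity.exists_isSubordinate isClosed_univ U hUo hcover
    have hρsum : ∀ x, ∑ i, ρ i x = 1 := fun x => by
      have h := ρ.sum_eq_one (mem_univ x)
      rwa [finsum_eq_sum_of_fintype] at h
    have hρ0 : ∀ i x, 0 ≤ ρ i x := fun i x => ρ.nonneg i x
    have hρ1 : ∀ i x, ρ i x ≤ 1 := by
      intro i x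
      have h1 : ρ i x ≤ ∑ j, ρ j x :=
        Finset.single_le_sum (fun j _ => hρ0 j x) (Finset.mem_univ i)
      rw [hρsum x] at h1
      exact h1
    set m : Fin N → ℝ := fun i => (μ (E i)).toReal with hm
    have hm0 : ∀ i, 0 ≤ m i := fun i => ENNReal.toReal_nonneg
    have hmU : ∀ i, (μ (U i)).toReal ≤ m i + ε / N := by
      intro i
      have h1 := ENNReal.toReal_mono
        (ENNReal.add_ne_top.mpr ⟨rmeas_ne_top ψ hpos _, ENNReal.ofReal_ne_top⟩) (hUμ i)
      rwa [ENNReal.toReal_add (rmeas_ne_top ψ hpos _) ENNReal.ofReal_ne_top,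
        ENNReal.toReal_ofReal (by positivity)] at h1
    have hmsum : ∑ i, m i = ψ 1 := by
      have h1 : μ (univ : Set X) = ∑' i, μ (E i) := by
        rw [← hEuniv]; exact measure_iUnion hEdis hEm
      rw [tsum_fintype] at h1
      have h2 := congrArg ENNReal.toReal h1
      rw [rmeas_univ_toReal ψ hpos,
        ENNReal.toReal_sum (fun i _ => rmeas_ne_top ψ hpos _)] at h2
      exact h2.symm
    have hψρsum : ∑ i, ψ (ρ i) = ψ 1 := by
      rw [← map_sum]
      congr 1
      ext x
      simp only [ContinuousMap.coe_sum, Finset.sum_apply, ContinuousMap.one_apply]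
      exact hρsum x
    have hsplit : ψ f = ∑ i, ψ ((ρ i : C(X,ℝ)) * f) := by
      rw [← map_sum]
      congr 1
      ext x
      simp only [ContinuousMap.coe_sum, Finset.sum_apply, ContinuousMap.mul_apply]
      rw [← Finset.sum_mul, hρsum x, one_mul]
    have hbound1 : ∀ i, ψ ((ρ i : C(X,ℝ)) * f) ≤ (y ((i:ℕ)+1) + ε) * ψ (ρ i) := by
      intro i
      have hpt : ∀ x, ((ρ i : C(X,ℝ)) * f) x ≤ ((y ((i:ℕ)+1) + ε) • (ρ i : C(X,ℝ))) x := by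
        intro x
        simp only [ContinuousMap.mul_apply, ContinuousMap.smul_apply, smul_eq_mul]
        rcases eq_or_lt_of_le (hρ0 i x) with h0 | h0
        · rw [← h0]; simp
        · have hxU : x ∈ U i := hρ i (subset_tsupport _ (Function.mem_support.mpr (ne_of_gt h0)))
          have hflt : f x < y ((i:ℕ)+1) + ε := hxU.2
          nlinarith
      have h1 := psi_mono ψ hpos hpt
      rwa [LinearMap.map_smul, smul_eq_mul] at h1
    have hbound2 : ∀ i, ψ (ρ i) ≤ m i + ε / N := fun i =>
      le_trans (psi_le_rmeas ψ hpos (ρ i) (hρ0 i) (hρ1 i) (hUo i) (hρ i)) (hmU i)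
    have hψρ0 : ∀ i, 0 ≤ ψ (ρ i) := fun i => hpos _ (hρ0 i)
    -- coefficient bounds
    set M : ℝ := ‖f‖ + 2 with hM
    set c : Fin N → ℝ := fun i => y ((i:ℕ)+1) + ε with hc
    have hc_lb : ∀ i, -‖f‖ + ε ≤ c i := by
      intro i
      have h1 : y 1 ≤ y ((i:ℕ)+1) := hymono (by omega)
      have h2 : y 1 = -‖f‖ := by simp [hy]
      simp only [hc]; linarith
    have hc_ub : ∀ i, c i ≤ ‖f‖ + 2 * ε := by
      intro i
      have h1 : y ((i:ℕ)+1) ≤ y N := hymono (by omega)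
      simp only [hc]; linarith [hyN]
    have hcM0 : ∀ i, 0 ≤ c i + M := by
      intro i; have := hc_lb i; simp only [hM]; linarith
    set B : ℝ := 2 * ‖f‖ + 2 * ε + 2 with hB
    have hcMB : ∀ i, c i + M ≤ B := by
      intro i; have := hc_ub i; simp only [hM, hB]; linarith
    -- chain
    have s1 : ψ f ≤ ∑ i, c i * ψ (ρ i) := by
      rw [hsplit]
      exact Finset.sum_le_sum fun i _ => hbound1 i
    have s2 : ∑ i, c i * ψ (ρ i) = ∑ i, (c i + M) * ψ (ρ i) - M * ψ 1 := by
      rw [← hψρsum, Finset.mul_sum, ← Finset.sum_sub_distrib]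
      exact Finset.sum_congr rfl fun i _ => by ring
    have s3 : ∑ i, (c i + M) * ψ (ρ i) ≤ ∑ i, (c i + M) * (m i + ε / N) :=
      Finset.sum_le_sum fun i _ => mul_le_mul_of_nonneg_left (hbound2 i) (hcM0 i)
    have s4 : ∑ i, (c i + M) * (m i + ε / N) =
        ∑ i, c i * m i + M * ψ 1 + (ε / N) * ∑ i, (c i + M) := by
      rw [← hmsum, Finset.mul_sum, Finset.mul_sum, ← Finset.sum_add_distrib,
        ← Finset.sum_add_distrib]
      exact Finset.sum_congr rfl fun i _ => by ring
    have s5 : (ε / N) * ∑ i, (c i + M) ≤ ε * B := by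
      have h1 : ∑ i, (c i + M) ≤ (N : ℝ) * B := by
        calc ∑ i : Fin N, (c i + M) ≤ ∑ _i : Fin N, B :=
              Finset.sum_le_sum fun i _ => hcMB i
          _ = (N : ℝ) * B := by
              rw [Finset.sum_const, Finset.card_univ, Fintype.card_fin]
              simp [nsmul_eq_mul]
      have h2 : (ε / N) * ∑ i, (c i + M) ≤ (ε / N) * ((N : ℝ) * B) :=
        mul_le_mul_of_nonneg_left h1 (by positivity)
      calc (ε / N) * ∑ i, (c i + M) ≤ (ε / N) * ((N : ℝ) * B) := h2
        _ = ε * B := by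
            field_simp
    have s6 : ∑ i, c i * m i ≤ (∫ x, f x ∂μ) + 2 * ε * ψ 1 := by
      have hint_i : ∀ i, c i * m i ≤ ∫ x in E i, (f x + 2 * ε) ∂μ := by
        intro i
        have hconst : ∫ x in E i, (c i) ∂μ = m i * c i := by
          rw [setIntegral_const, smul_eq_mul]; rfl
        have hmono2 : ∫ x in E i, (c i) ∂μ ≤ ∫ x in E i, (f x + 2 * ε) ∂μ := by
          refine setIntegral_mono_on
            (integrableOn_const (rmeas_ne_top ψ hpos _))
            ((hfint.add (integrable_const _)).integrableOn) (hEm i) ?_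
          intro x hx
          have h1 : y ((i:ℕ)) < f x := hx.1
          have h2 : y ((i:ℕ)+1) = y ((i:ℕ)) + ε := by simp [hy]; ring
          simp only [hc]
          linarith
        rw [hconst] at hmono2
        linarith [hmono2]
      have hsum_int : ∑ i, ∫ x in E i, (f x + 2 * ε) ∂μ = ∫ x, (f x + 2 * ε) ∂μ := by
        have h1 := integral_biUnion_finset (f := fun x => f x + 2 * ε) (μ := μ)
          Finset.univ (fun i _ => hEm i) (hEdis.set_pairwise _)
          (fun i _ => (hfint.add (integrable_const _)).integrableOn)
        have h2 : ⋃ i ∈ Finset.univ, E i = univ := by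
          simpa using hEuniv
        rw [h2] at h1
        rw [← h1, setIntegral_univ]
      have hint_tot : ∫ x, (f x + 2 * ε) ∂μ = (∫ x, f x ∂μ) + 2 * ε * ψ 1 := by
        rw [integral_add hfint (integrable_const _), integral_const, smul_eq_mul, measureReal_def,
          rmeas_univ_toReal ψ hpos]
        ring
      calc ∑ i, c i * m i ≤ ∑ i, ∫ x in E i, (f x + 2 * ε) ∂μ :=
            Finset.sum_le_sum fun i _ => hint_i i
        _ = (∫ x, f x ∂μ) + 2 * ε * ψ 1 := by rw [hsum_int, hint_tot]
    -- combine
    have hεB : ε * B ≤ ε * (2 * ‖f‖ + 4) := by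
      have : B ≤ 2 * ‖f‖ + 4 := by simp only [hB]; linarith
      exact mul_le_mul_of_nonneg_left this hε.le
    calc ψ f ≤ ∑ i, c i * ψ (ρ i) := s1
      _ = ∑ i, (c i + M) * ψ (ρ i) - M * ψ 1 := s2
      _ ≤ ∑ i, (c i + M) * (m i + ε / N) - M * ψ 1 := by linarith [s3]
      _ = ∑ i, c i * m i + (ε / N) * ∑ i, (c i + M) := by rw [s4]; ring
      _ ≤ (∫ x, f x ∂μ) + 2 * ε * ψ 1 + ε * B := by linarith [s5, s6]
      _ ≤ (∫ x, f x ∂μ) + ε * (2 * ψ 1 + 4 * ‖f‖ + 6) := by nlinarith [hεB, norm_nonneg f]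
  -- conclude by letting ε → 0
  set D : ℝ := 2 * ψ 1 + 4 * ‖f‖ + 6 with hD
  have hD0 : 0 < D := by simp only [hD]; nlinarith [norm_nonneg f]
  refine le_of_forall_pos_le_add fun δ hδ => ?_
  have hmin : 0 < min 1 (δ / D) := lt_min one_pos (div_pos hδ hD0)
  have h1 := main _ hmin (min_le_left _ _)
  have h2 : min 1 (δ / D) * D ≤ δ := by
    have h3 : min 1 (δ / D) * D ≤ (δ / D) * D :=
      mul_le_mul_of_nonneg_right (min_le_right _ _) hD0.le
    rwa [div_mul_cancel₀ _ (ne_of_gt hD0)] at h3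
  linarith

lemma integral_eq_psi (hpos : ∀ f : C(X, ℝ), (∀ x, 0 ≤ f x) → 0 ≤ ψ f) (f : C(X, ℝ)) :
    ∫ x, f x ∂(rmeas ψ hpos) = ψ f := by
  have h1 := psi_le_integral ψ hpos f
  have h2 := psi_le_integral ψ hpos (-f)
  haveI : IsFiniteMeasure (rmeas ψ hpos) := rmeas_isFiniteMeasure ψ hpos
  have hfint : Integrable (fun x => f x) (rmeas ψ hpos) := by
    rw [← integrableOn_univ]
    exact (map_continuous f).continuousOn.integrableOn_compact isCompact_univ
  rw [map_neg] at h2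
  have h3 : ∫ x, (-f) x ∂(rmeas ψ hpos) = -∫ x, f x ∂(rmeas ψ hpos) := by
    simp only [ContinuousMap.neg_apply]
    exact integral_neg _
  rw [h3] at h2
  linarith

end Stmt11Aux

open Stmt11Aux in
set_option maxHeartbeats 1000000 in
theorem stmt11 {X : Type*} [MetricSpace X] [CompactSpace X]
    [MeasurableSpace X] [BorelSpace X]
    (G : Set C(X, ℝ))
    (hadd : ∀ f ∈ G, ∀ g ∈ G, f + g ∈ G)
    (hsmul : ∀ c : ℝ, 0 ≤ c → ∀ f ∈ G, c • f ∈ G)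
    (hnonneg : ∀ f : C(X, ℝ), (∀ x, 0 ≤ f x) → f ∈ G)
    (hclosed : IsClosed G) (hint : (interior G).Nonempty)
    (g : C(X, ℝ)) (hg : g ∈ frontier G) :
    ∃ μ : Measure X, IsProbabilityMeasure μ ∧
      (∀ f ∈ G, 0 ≤ ∫ x, f x ∂μ) ∧ ∫ x, g x ∂μ = 0 := by
  classical
  have hGconv : Convex ℝ G := by
    intro f hf g' hg' a b ha hb hab
    exact hadd _ (hsmul a ha f hf) _ (hsmul b hb g' hg')
  have hgG : g ∈ G := by
    have h1 := frontier_subset_closure (s := G) hg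
    rwa [hclosed.closure_eq] at h1
  have hgi : g ∉ interior G := hg.2
  obtain ⟨φ, hφ⟩ := geometric_hahn_banach_open_point hGconv.interior isOpen_interior hgi
  obtain ⟨a₀, ha₀⟩ := hint
  have hle : ∀ f ∈ G, φ f ≤ φ g := by
    intro f hf
    have key : ∀ t : ℝ, t ∈ Set.Ioo (0:ℝ) 1 → t * φ a₀ + (1 - t) * φ f < φ g := by
      intro t ht
      have hmem : t • a₀ + (1 - t) • f ∈ interior G :=
        hGconv.combo_interior_closure_mem_interior ha₀ (subset_closure hf) ht.1
          (by linarith [ht.2]) (by ring)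
      have h2 := hφ _ hmem
      simpa [map_add, _root_.map_smul, smul_eq_mul] using h2
    have htend : Filter.Tendsto (fun t : ℝ => t * φ a₀ + (1 - t) * φ f)
        (nhdsWithin 0 (Set.Ioi 0)) (nhds (φ f)) := by
      have hcont : Continuous fun t : ℝ => t * φ a₀ + (1 - t) * φ f := by continuity
      have h0 : (fun t : ℝ => t * φ a₀ + (1 - t) * φ f) 0 = φ f := by norm_num
      have h1 := hcont.tendsto 0
      have h0' : (0:ℝ) * φ a₀ + (1 - 0) * φ f = φ f := by norm_num
      rw [h0'] at h1
      exact h1.mono_left nhdsWithin_le_nhds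
    refine le_of_tendsto htend ?_
    have hIoo : Set.Ioo (0:ℝ) 1 ∈ nhdsWithin (0:ℝ) (Set.Ioi 0) :=
      Ioo_mem_nhdsGT_of_mem (by constructor <;> norm_num)
    filter_upwards [hIoo] with t ht
    exact (key t ht).le
  have hφg : φ g = 0 := by
    have h0 : (0 : C(X,ℝ)) ∈ G := hnonneg 0 fun x => le_refl 0
    have h1 : (0:ℝ) ≤ φ g := by have := hle 0 h0; simpa using this
    have h2 : φ ((2:ℝ) • g) ≤ φ g := hle _ (hsmul 2 (by norm_num) g hgG)
    rw [_root_.map_smul, smul_eq_mul] at h2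
    linarith
  have hφle : ∀ f ∈ G, φ f ≤ 0 := fun f hf => hφg ▸ hle f hf
  set ψ₀ : C(X,ℝ) →ₗ[ℝ] ℝ := -(φ : C(X,ℝ) →L[ℝ] ℝ).toLinearMap with hψ₀def
  have hψ₀app : ∀ f : C(X,ℝ), ψ₀ f = -φ f := fun f => rfl
  have hpos₀ : ∀ f : C(X,ℝ), (∀ x, 0 ≤ f x) → 0 ≤ ψ₀ f := by
    intro f hf
    rw [hψ₀app]
    linarith [hφle f (hnonneg f hf)]
  have hG₀ : ∀ f ∈ G, 0 ≤ ψ₀ f := by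
    intro f hf
    rw [hψ₀app]
    linarith [hφle f hf]
  have ha₀pos : 0 < ψ₀ a₀ := by
    rw [hψ₀app]
    have := hφ a₀ ha₀
    rw [hφg] at this
    linarith
  have hψ₀1 : 0 < ψ₀ 1 := by
    have hb : ∀ x, a₀ x ≤ (‖a₀‖ • (1 : C(X,ℝ))) x := by
      intro x
      have h1 : |a₀ x| ≤ ‖a₀‖ := by
        simpa [Real.norm_eq_abs] using a₀.norm_coe_le_norm x
      calc a₀ x ≤ ‖a₀‖ := (abs_le.mp h1).2
        _ = (‖a₀‖ • (1 : C(X,ℝ))) x := by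
            rw [ContinuousMap.smul_apply, ContinuousMap.one_apply, smul_eq_mul, mul_one]
    have h2 : ψ₀ a₀ ≤ ψ₀ (‖a₀‖ • (1 : C(X,ℝ))) := psi_mono ψ₀ hpos₀ hb
    rw [LinearMap.map_smul, smul_eq_mul] at h2
    nlinarith [hpos₀ 1 (fun x => zero_le_one), norm_nonneg a₀]
  set Ψ : C(X,ℝ) →ₗ[ℝ] ℝ := (ψ₀ 1)⁻¹ • ψ₀ with hΨdef
  have hΨapp : ∀ f : C(X,ℝ), Ψ f = (ψ₀ 1)⁻¹ * ψ₀ f := fun f => rfl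
  have hΨpos : ∀ f : C(X,ℝ), (∀ x, 0 ≤ f x) → 0 ≤ Ψ f := by
    intro f hf
    rw [hΨapp]
    exact mul_nonneg (inv_nonneg.mpr hψ₀1.le) (hpos₀ f hf)
  have hΨ1 : Ψ 1 = 1 := by
    rw [hΨapp]
    exact inv_mul_cancel₀ (ne_of_gt hψ₀1)
  refine ⟨rmeas Ψ hΨpos, ?_, ?_, ?_⟩
  · constructor
    rw [← ENNReal.toReal_eq_one_iff]
    rw [rmeas_univ_toReal Ψ hΨpos, hΨ1]
  · intro f hf
    rw [integral_eq_psi Ψ hΨpos f, hΨapp]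
    exact mul_nonneg (inv_nonneg.mpr hψ₀1.le) (hG₀ f hf)
  · rw [integral_eq_psi Ψ hΨpos g, hΨapp]
    have hz : ψ₀ g = 0 := by rw [hψ₀app, hφg]; ring
    rw [hz, mul_zero]
end
end
end

section
/- Let $u_1, u_2$ be bounded continuous real functions on $\mathbb{T}^d$, $\varepsilon>0$, and $\lambda>0$ with $\lambda\|u_i\|_\infty < \varepsilon$ for $i=1,2$, and assume $u_1 > u_2$ pointwise on $\mathbb{T}^d$. If $a_1 + \varepsilon < a_2 - \varepsilon$ for real numbers $a_1, a_2$, then from $\lambda u_1(x) + F[u_1](x) < a_1 + \varepsilon$ and $\lambda u_2(x) + F[u_2](x) > a_2 - \varepsilon$ for an operator $F$ satisfying a comparison principle (sub $\le$ super for the equation $\lambda u + F[u] = g$ with common right-hand side), one deduces a contradiction; consequently, if there exist a continuous subsolution of $F[u]=a_1$ and a continuous supersolution of $F[u]=a_2$ on $\mathbb{T}^d$, then $a_2 \le a_1$. -/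
noncomputable section

/-- The flat `d`-dimensional torus `ℝ^d / ℤ^d`. -/
abbrev Torus (d : ℕ) := Fin d → AddCircle (1 : ℝ)

open Filter Topology

section DiscountedComparison

variable {X : Type*} [TopologicalSpace X]

def HasDiscountedComparison (F : (X → ℝ) → X → ℝ) : Prop :=
  ∀ lam : ℝ, 0 < lam → ∀ u v g : X → ℝ, Continuous u → Continuous v →
    (∀ x, lam * u x + F u x ≤ g x) → (∀ x, g x ≤ lam * v x + F v x) → ∀ x, u x ≤ v x

theorem Continuous.eventually_mul_abs_le [CompactSpace X] {u : X → ℝ} (hu : Continuous u)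
    {ε : ℝ} (hε : 0 < ε) : ∀ᶠ lam in 𝓝[>] (0 : ℝ), ∀ x, lam * |u x| ≤ ε := by
  obtain ⟨C, hC⟩ := isCompact_univ.exists_bound_of_continuousOn hu.continuousOn
  have hlim : Tendsto (fun lam : ℝ => lam * C) (𝓝[>] 0) (𝓝 0) :=
    ((continuous_mul_const C).tendsto' 0 0 (zero_mul C)).mono_left nhdsWithin_le_nhds
  filter_upwards [hlim.eventually (gt_mem_nhds hε), self_mem_nhdsWithin] with lam hlamC hlam x
  calc lam * |u x| ≤ lam * C := mul_le_mul_of_nonneg_left (hC x trivial) (le_of_lt hlam)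
    _ ≤ ε := hlamC.le

/-- A small discount `λ` perturbs a subsolution of `F[u] = a` and a supersolution of
`F[v] = b` by at most `ε`, so once `a + ε ≤ b - ε` they are ordered sub- and supersolutions
of the discounted equation with the constant right-hand side `a + ε`. -/
theorem HasDiscountedComparison.le_of_levels_separated {F : (X → ℝ) → X → ℝ}
    (hF : HasDiscountedComparison F) {u v : X → ℝ} (hu : Continuous u) (hv : Continuous v)
    {lam ε a b : ℝ} (hlam : 0 < lam) (hu_small : ∀ x, lam * |u x| ≤ ε) (hv_small : ∀ x, lam * |v x| ≤ ε)
    (hab : a + ε ≤ b - ε) (hFu : ∀ x, F u x ≤ a) (hFv : ∀ x, b ≤ F v x) :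
    ∀ x, u x ≤ v x := by
  refine hF lam hlam u v (fun _ => a + ε) hu hv (fun x => ?_) (fun x => ?_)
  · have : lam * u x ≤ lam * |u x| := mul_le_mul_of_nonneg_left (le_abs_self _) hlam.le
    linarith [hu_small x, hFu x]
  · have : -(lam * |v x|) ≤ lam * v x := by
      rw [← mul_neg]; exact mul_le_mul_of_nonneg_left (neg_abs_le _) hlam.le
    linarith [hv_small x, hFv x]

end DiscountedComparison

theorem stmt19 {d : ℕ} (F : (Torus d → ℝ) → Torus d → ℝ)
    -- F commutes with addition of constants (as for -𝓘u + H(x, Du))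
    (htrans : ∀ (u : Torus d → ℝ) (c : ℝ), F (fun x => u x + c) = F u)
    -- comparison principle for the discounted equation λu + F[u] = g
    (hcomp : ∀ lam : ℝ, 0 < lam → ∀ u v g : Torus d → ℝ,
      Continuous u → Continuous v →
      (∀ x, lam * u x + F u x ≤ g x) → (∀ x, g x ≤ lam * v x + F v x) →
      ∀ x, u x ≤ v x)
    (a₁ a₂ : ℝ) (u₁ u₂ : Torus d → ℝ)
    (h₁c : Continuous u₁) (h₂c : Continuous u₂)
    -- u₁ is a subsolution of F[u] = a₁, u₂ a supersolution of F[u] = a₂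
    (h₁ : ∀ x, F u₁ x ≤ a₁) (h₂ : ∀ x, a₂ ≤ F u₂ x) :
    a₂ ≤ a₁ := by
  by_contra! hlt
  have hε : 0 < (a₂ - a₁) / 2 := half_pos (sub_pos.2 hlt)
  -- lift u₁ above u₂ at the point 0; by translation invariance it stays a subsolution
  set w : Torus d → ℝ := fun x => u₁ x + (u₂ 0 - u₁ 0 + 1) with hw
  have hwc : Continuous w := h₁c.add continuous_const
  have hFw : F w = F u₁ := htrans u₁ _
  obtain ⟨lam, hw_small, hu₂_small, hlam⟩ := ((hwc.eventually_mul_abs_le hε).and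
    ((h₂c.eventually_mul_abs_le hε).and self_mem_nhdsWithin)).exists
  have hle : w 0 ≤ u₂ 0 :=
    HasDiscountedComparison.le_of_levels_separated hcomp hwc h₂c hlam hw_small hu₂_small (by linarith)
      (fun x => hFw ▸ h₁ x) h₂ 0
  simp only [hw] at hle
  linarith
end
end
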